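/- Define f(t) = (1 + t)/√(2(1 + t²)) for real t. If t is a real number with 1/2 ≤ t ≤ 1 (equivalently, t and 2t lie on opposite sides of 1), then max(f(t), f(2t)) ≥ (1 + √2)/√6, with equality exactly when t = 1/√2. -/

import Mathlib

/-! With `c = (1 + √2)/√6`, squaring gives
`c² - f(u)² = (√2 u - 1)(u - √2) / (3 (1 + u²))`, so for `u ≥ -1` (where `f u ≥ 0`) we have
`c ≤ f u` exactly for `u ∈ [1/√2, √2]`, strictly inside. For `1/2 ≤ t ≤ 1`, `t` lies in this
interval when `t ≥ 1/√2` and `2t` does when `t ≤ 1/√2`; both are endpoints only at `t = 1/√2`. -/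

open Real

noncomputable def plusOverlap (u : ℝ) : ℝ := (1 + u) / √(2 * (1 + u ^ 2))

lemma plusOverlap_nonneg {u : ℝ} (hu : -1 ≤ u) : 0 ≤ plusOverlap u :=
  div_nonneg (by linarith) (sqrt_nonneg _)

lemma sq_threshold_sub_sq_plusOverlap (u : ℝ) :
    ((1 + √2) / √6) ^ 2 - plusOverlap u ^ 2 = (√2 * u - 1) * (u - √2) / (3 * (1 + u ^ 2)) := by
  rw [plusOverlap, div_pow, div_pow, sq_sqrt (by norm_num), sq_sqrt (by positivity)]
  field_simp
  linear_combination 6 * (1 + u) ^ 2 * sq_sqrt (zero_le_two : (0 : ℝ) ≤ 2)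

lemma threshold_le_plusOverlap_iff {u : ℝ} (hu : -1 ≤ u) :
    (1 + √2) / √6 ≤ plusOverlap u ↔ (√2 * u - 1) * (u - √2) ≤ 0 := by
  rw [← pow_le_pow_iff_left₀ (by positivity) (plusOverlap_nonneg hu) two_ne_zero, ← sub_nonpos,
    sq_threshold_sub_sq_plusOverlap, div_le_iff₀ (by positivity), zero_mul]

lemma threshold_lt_plusOverlap_iff {u : ℝ} (hu : -1 ≤ u) :
    (1 + √2) / √6 < plusOverlap u ↔ (√2 * u - 1) * (u - √2) < 0 := by
  rw [← pow_lt_pow_iff_left₀ (by positivity) (plusOverlap_nonneg hu) two_ne_zero, ← sub_neg,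
    sq_threshold_sub_sq_plusOverlap, div_lt_iff₀ (by positivity), zero_mul]

/-- For `f(t) = (1+t)/√(2(1+t²))` and `1/2 ≤ t ≤ 1`, the larger of `f(t)` and `f(2t)`
is at least `(1+√2)/√6`, with equality exactly when `t = 1/√2`. -/
theorem stmt_2 (f : ℝ → ℝ) (hf : ∀ t : ℝ, f t = (1 + t) / Real.sqrt (2 * (1 + t ^ 2)))
    (t : ℝ) (ht1 : 1 / 2 ≤ t) (ht2 : t ≤ 1) :
    (1 + Real.sqrt 2) / Real.sqrt 6 ≤ max (f t) (f (2 * t)) ∧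
    (max (f t) (f (2 * t)) = (1 + Real.sqrt 2) / Real.sqrt 6 ↔ t = 1 / Real.sqrt 2) := by
  obtain rfl : f = plusOverlap := funext hf
  have hs2 : √2 * √2 = 2 := mul_self_sqrt zero_le_two
  have hs2_gt_one : 1 < √2 := by nlinarith [sqrt_nonneg 2]
  have ht : -1 ≤ t := by linarith
  have h2t : -1 ≤ 2 * t := by linarith
  have hlower : (1 + √2) / √6 ≤ max (plusOverlap t) (plusOverlap (2 * t)) := by
    rcases le_total (√2 * t) 1 with hle | hge
    · refine le_max_of_le_right ((threshold_le_plusOverlap_iff h2t).2 ?_)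
      exact mul_nonpos_of_nonneg_of_nonpos (by nlinarith) (by nlinarith)
    · refine le_max_of_le_left ((threshold_le_plusOverlap_iff ht).2 ?_)
      exact mul_nonpos_of_nonneg_of_nonpos (by linarith) (by linarith)
  have hroot : t = 1 / √2 ↔ √2 * t = 1 := by rw [eq_div_iff (by positivity), mul_comm]
  rw [hroot]
  refine ⟨hlower, fun h => ?_, fun h => le_antisymm (max_le ?_ ?_) hlower⟩
  · rcases lt_trichotomy (√2 * t) 1 with hlt | heq | hgt
    · have h2t_inside := (threshold_lt_plusOverlap_iff h2t).2
        (mul_neg_of_pos_of_neg (by nlinarith) (by nlinarith))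
      exact absurd h (lt_max_of_lt_right h2t_inside).ne'
    · exact heq
    · have ht_inside := (threshold_lt_plusOverlap_iff ht).2
        (mul_neg_of_pos_of_neg (by linarith) (by linarith))
      exact absurd h (lt_max_of_lt_left ht_inside).ne'
  · exact not_lt.1 fun hlt => ((threshold_lt_plusOverlap_iff ht).1 hlt).ne (by rw [h]; ring)
  · exact not_lt.1 fun hlt => ((threshold_lt_plusOverlap_iff h2t).1 hlt).ne (by nlinarith)
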